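/- Let w be a word containing exactly one kink. Then there exists n ∈ ℕ such that f18^n(w) is a left unstable or right unstable word. -/

import Mathlib

open Filter MeasureTheory

/-- The local rule of ECA 18. -/
def rule18 (a b c : Bool) : Bool := (!a && !b && c) || (a && !b && !c)

/-- The local rule of ECA 90. -/
def rule90 (a _b c : Bool) : Bool := xor a c

/-- ECA 18 acting on configurations. -/
def f18C (x : ℤ → Bool) : ℤ → Bool := fun i => rule18 (x (i - 1)) (x i) (x (i + 1))

/-- ECA 90 acting on configurations. -/
def f90C (x : ℤ → Bool) : ℤ → Bool := fun i => rule90 (x (i - 1)) (x i) (x (i + 1))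

/-- Applying a radius-1 local rule to a finite word (shortens it by 2). -/
def mapWord (R : Bool → Bool → Bool → Bool) (w : List Bool) : List Bool :=
  (List.range (w.length - 2)).map fun i =>
    R (w.getD i false) (w.getD (i + 1) false) (w.getD (i + 2) false)

/-- ECA 18 acting on finite words. -/
def f18W : List Bool → List Bool := mapWord rule18

/-- ECA 90 acting on finite words. -/
def f90W : List Bool → List Bool := mapWord rule90

/-- The kink `1 0^(2k) 1`. -/
def kinkWord (k : ℕ) : List Bool := true :: (List.replicate (2 * k) false ++ [true])

/-- A kink occurs in the word `w` at position `i`. -/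
def kinkAtW (w : List Bool) (i : ℕ) : Prop :=
  ∃ k, (w.drop i).take (2 * k + 2) = kinkWord k

/-- The number of kinks in a finite word: the number of positions where a kink occurs. -/
noncomputable def kinkCount (w : List Bool) : ℕ := {i : ℕ | kinkAtW w i}.ncard

/-- A kink occurs in the configuration `x` at position `i`. -/
def kinkAtC (x : ℤ → Bool) (i : ℤ) : Prop :=
  ∃ k, ∀ j : ℕ, j < 2 * k + 2 → x (i + j) = (kinkWord k).getD j false

/-- The configuration `x` contains exactly `m` kinks: the set of positions where a kink
occurs is finite of cardinality `m` (equivalently, `g_x(n)` tends to `m`). -/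
def configKinks (x : ℤ → Bool) (m : ℕ) : Prop :=
  {i : ℤ | kinkAtC x i}.Finite ∧ {i : ℤ | kinkAtC x i}.ncard = m

/-- Left unstable words: the regular language `(ε+0)(10)^* 11 (0+1)^*`. -/
def leftUnstable (w : List Bool) : Prop :=
  ∃ z t : List Bool, ∃ n : ℕ, (z = [] ∨ z = [false]) ∧
    w = z ++ (List.replicate n [true, false]).flatten ++ [true, true] ++ t

/-- Right unstable words: the regular language `(0+1)^* 11 (01)^* (ε+0)`. -/
def rightUnstable (w : List Bool) : Prop :=
  ∃ z s : List Bool, ∃ n : ℕ, (z = [] ∨ z = [false]) ∧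
    w = s ++ [true, true] ++ (List.replicate n [false, true]).flatten ++ z

/-- Stable words: those that are neither left nor right unstable. -/
def stable (w : List Bool) : Prop := ¬ (leftUnstable w ∨ rightUnstable w)

/-- The finite extension `Σ(w)`: words `a ++ w ++ b` with the same number of kinks as `w`. -/
def extW (w : List Bool) : Set (List Bool) :=
  {u | (∃ a b : List Bool, u = a ++ w ++ b) ∧ kinkCount u = kinkCount w}

/-- The extension `Σ̃(w, p)`: configurations containing `w` at position `p`,
with the same number of kinks as `w`. -/
def extC (w : List Bool) (p : ℤ) : Set (ℤ → Bool) :=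
  {x | (∀ j : ℕ, j < w.length → x (p + j) = w.getD j false) ∧ configKinks x (kinkCount w)}

/-- The cylinder set `[w]_i`. -/
def cyl (w : List Bool) (i : ℤ) : Set (ℤ → Bool) :=
  {x | ∀ j : ℕ, j < w.length → x (i + j) = w.getD j false}

/-! A kink is a pair of consecutive 1s at odd distance. Hence a word with a single kink at `i`
has all its 1s up to `i` in the phase of `i` and all later 1s in the other phase. A 1 produced
by rule 18 at `c` comes from a 1 at `c` or `c + 2`, so `f18` keeps this phase split with the cut
at the same index, and `f18 w` again has exactly one kink as soon as it keeps a 1 on each side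
of the cut. A kink `1 0^(2k) 1` with `k ≥ 1` just shrinks. For the kink `11`, rule 18 acts as
rule 90 on the phase of each side, and all 1s on one side die out only if that side alternates
`…1010` up to the kink, i.e. if `w` is left or right unstable. Since `f18` shortens words, a
stable word with one kink cannot persist. -/

theorem kinkWord_length (k : ℕ) : (kinkWord k).length = 2 * k + 2 := by
  simp [kinkWord]

theorem kinkWord_getD (k m : ℕ) :
    (kinkWord k).getD m false = decide (m = 0 ∨ m = 2 * k + 1) := by
  rcases m with _ | m
  · simp [kinkWord]
  · rw [kinkWord, List.getD_cons_succ]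
    rcases lt_or_ge m (2 * k) with hm | hm
    · rw [List.getD_append _ _ _ _ (by simpa using hm), List.getD_replicate _ hm]
      simp only [false_eq_decide_iff]
      omega
    · rw [List.getD_append_right _ _ _ _ (by simpa using hm)]
      obtain ⟨d, rfl⟩ := Nat.exists_eq_add_of_le hm
      rcases d with _ | d <;> simp

theorem List.prefix_iff_getD {α : Type*} {u l : List α} (d : α) :
    u <+: l ↔ u.length ≤ l.length ∧ ∀ m < u.length, l.getD m d = u.getD m d := by
  rw [List.prefix_iff_getElem]
  refine ⟨fun ⟨hle, h⟩ => ⟨hle, fun m hm => ?_⟩, fun ⟨hle, h⟩ => ⟨hle, fun m hm => ?_⟩⟩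
  · rw [List.getD_eq_getElem _ _ hm, List.getD_eq_getElem _ _ (hm.trans_le hle), h]
  · have := h m hm
    rwa [List.getD_eq_getElem _ _ hm, List.getD_eq_getElem _ _ (hm.trans_le hle), eq_comm] at this

theorem List.lt_length_of_getD_eq_true {w : List Bool} {m : ℕ} (h : w.getD m false = true) :
    m < w.length := by
  by_contra hm
  rw [List.getD_eq_default _ _ (not_lt.mp hm)] at h
  exact Bool.false_ne_true h

theorem kinkAtW_iff {w : List Bool} {i : ℕ} :
    kinkAtW w i ↔ ∃ j, i < j ∧ j % 2 ≠ i % 2 ∧ w.getD i false = true ∧ w.getD j false = true ∧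
      ∀ m, i < m → m < j → w.getD m false = false := by
  have hpre (k : ℕ) : (w.drop i).take (2 * k + 2) = kinkWord k ↔ kinkWord k <+: w.drop i := by
    rw [List.prefix_iff_eq_take, eq_comm, kinkWord_length]
  have hdrop (m : ℕ) : (w.drop i).getD m false = w.getD (i + m) false := by
    simp [List.getD_eq_getElem?_getD]
  simp only [kinkAtW, hpre, List.prefix_iff_getD false, hdrop, kinkWord_getD, kinkWord_length,
    List.length_drop]
  constructor
  · rintro ⟨k, -, h⟩
    refine ⟨i + (2 * k + 1), by omega, by omega, by simpa using h 0, by simpa using h (2 * k + 1),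
      fun m h1 h2 => ?_⟩
    have := h (m - i) (by omega)
    rw [Nat.add_sub_cancel' h1.le] at this
    rw [this, decide_eq_false_iff_not]
    omega
  · rintro ⟨j, hij, hodd, hi, hj, hgap⟩
    obtain ⟨k, rfl⟩ : ∃ k, j = i + (2 * k + 1) := ⟨(j - i - 1) / 2, by omega⟩
    refine ⟨k, by have := List.lt_length_of_getD_eq_true hj; omega, fun m hm => ?_⟩
    rcases Nat.eq_zero_or_pos m with rfl | hm0
    · simpa using hi
    rcases eq_or_ne m (2 * k + 1) with rfl | hmk
    · simpa using hj
    rw [hgap _ (by omega) (by omega)]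
    simp only [false_eq_decide_iff]
    omega

theorem exists_kinkAtW_of_mod_two_ne {w : List Bool} {a b : ℕ} (ha : w.getD a false = true)
    (hb : w.getD b false = true) (hab : a % 2 ≠ b % 2) :
    ∃ i, min a b ≤ i ∧ i < max a b ∧ kinkAtW w i := by
  wlog hlt : a < b generalizing a b
  · obtain ⟨i, hi⟩ := this hb ha hab.symm (by omega)
    rw [min_comm, max_comm] at hi
    exact ⟨i, hi⟩
  rw [min_eq_left hlt.le, max_eq_right hlt.le]
  induction hd : b - a using Nat.strong_induction_on generalizing a with
  | _ d ih =>
    classical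
    have hex : ∃ m, a < m ∧ w.getD m false = true := ⟨b, hlt, hb⟩
    obtain ⟨ham, hm⟩ := Nat.find_spec hex
    have hmb : Nat.find hex ≤ b := Nat.find_min' hex ⟨hlt, hb⟩
    by_cases hpar : Nat.find hex % 2 = a % 2
    · obtain ⟨i, hi₁, hi₂, hi⟩ := ih _ (by omega) hm (by omega) (by omega) rfl
      exact ⟨i, by omega, hi₂, hi⟩
    · have hgap : ∀ m, a < m → m < Nat.find hex → w.getD m false = false := fun m h₁ h₂ => by
        simpa [h₁] using Nat.find_min hex h₂
      exact ⟨a, le_rfl, by omega, kinkAtW_iff.2 ⟨_, ham, hpar, ha, hm, hgap⟩⟩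

theorem kinkCount_eq_one_iff {w : List Bool} :
    kinkCount w = 1 ↔ ∃ i, ∀ i', kinkAtW w i' ↔ i' = i := by
  simp [kinkCount, Set.ncard_eq_one, Set.ext_iff]

def ParitySplitAt (w : List Bool) (s : ℕ) : Prop :=
  ∀ m, w.getD m false = true → (m ≤ s ↔ m % 2 = s % 2)

theorem paritySplitAt_of_kinkCount_eq_one {w : List Bool} {i : ℕ} (h : kinkCount w = 1)
    (hi : kinkAtW w i) : ParitySplitAt w i := by
  obtain ⟨i₀, hi₀⟩ := kinkCount_eq_one_iff.1 h
  have huniq : ∀ i', kinkAtW w i' → i' = i := fun i' h' => ((hi₀ i').1 h').trans ((hi₀ i).1 hi).symm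
  obtain ⟨j, hij, hj₂, hwi, hwj, -⟩ := kinkAtW_iff.1 hi
  intro m hm
  by_contra hne
  rcases le_or_gt m i with hmi | hmi
  · obtain ⟨i', h₁, h₂, hk⟩ := exists_kinkAtW_of_mod_two_ne hm hwi (by omega)
    have := huniq i' hk
    omega
  · obtain ⟨i', h₁, h₂, hk⟩ := exists_kinkAtW_of_mod_two_ne hm hwj (by omega)
    have := huniq i' hk
    omega

theorem kinkCount_eq_one_of_paritySplitAt {w : List Bool} {s a b : ℕ} (hw : ParitySplitAt w s)
    (ha : w.getD a false = true) (has : a ≤ s) (hb : w.getD b false = true) (hsb : s < b) :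
    kinkCount w = 1 := by
  have hstraddle : ∀ i, kinkAtW w i → ∃ j, i ≤ s ∧ s < j ∧ w.getD i false = true ∧
      ∀ m, i < m → m < j → w.getD m false = false := by
    intro i hi
    obtain ⟨j, hij, hpar, hwi, hwj, hgap⟩ := kinkAtW_iff.1 hi
    have := hw i hwi
    have := hw j hwj
    exact ⟨j, by omega, by omega, hwi, hgap⟩
  obtain ⟨i₀, -, -, hi₀⟩ :=
    exists_kinkAtW_of_mod_two_ne ha hb (by have := hw a ha; have := hw b hb; omega)
  refine kinkCount_eq_one_iff.2 ⟨i₀, fun i => ⟨fun hi => ?_, fun h => h ▸ hi₀⟩⟩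
  obtain ⟨j, hi₁, hi₂, hwi, hgap⟩ := hstraddle i hi
  obtain ⟨j₀, h₀₁, h₀₂, hwi₀, hgap₀⟩ := hstraddle i₀ hi₀
  -- two kinks straddling `s` would each have their left end inside the other's gap
  rcases lt_trichotomy i i₀ with h | h | h
  · simp only [hgap i₀ h (by omega), Bool.false_eq_true] at hwi₀
  · exact h
  · simp only [hgap₀ i h (by omega), Bool.false_eq_true] at hwi

theorem f18W_length (w : List Bool) : (f18W w).length = w.length - 2 := by
  simp [f18W, mapWord]

theorem f18W_getD_of_lt {w : List Bool} {c : ℕ} (hc : c + 2 < w.length) :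
    (f18W w).getD c false =
      rule18 (w.getD c false) (w.getD (c + 1) false) (w.getD (c + 2) false) := by
  simp [f18W, mapWord, List.getD_eq_getElem?_getD, show c < w.length - 2 by omega]

theorem f18W_getD_eq_true {w : List Bool} {c : ℕ} (h : (f18W w).getD c false = true) :
    w.getD (c + 1) false = false ∧ (w.getD c false = true ∨ w.getD (c + 2) false = true) := by
  have hc : c + 2 < w.length := by
    have := List.lt_length_of_getD_eq_true h
    rw [f18W_length] at this
    omega
  rw [f18W_getD_of_lt hc] at h
  revert h
  cases w.getD c false <;> cases w.getD (c + 1) false <;> cases w.getD (c + 2) false <;> decide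

theorem ParitySplitAt.f18W {w : List Bool} {s : ℕ} (hw : ParitySplitAt w s)
    (hs : w.getD s false = true) (hs₂ : w.getD (s + 2) false = false) :
    ParitySplitAt (f18W w) s := by
  intro c hc
  obtain ⟨hc₁, hc | hc₂⟩ := f18W_getD_eq_true hc
  · exact hw c hc
  · have := hw (c + 2) hc₂
    have : c + 1 ≠ s := by rintro rfl; simp only [hs, Bool.true_eq_false] at hc₁
    have : c ≠ s := by rintro rfl; simp only [hs₂, Bool.false_eq_true] at hc₂
    omega

theorem rule18_comm (a b c : Bool) : rule18 a b c = rule18 c b a := by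
  cases a <;> cases b <;> cases c <;> rfl

theorem exists_eq_alternating_append {n : ℕ} {w : List Bool}
    (hn : w.getD (2 * n + 1) false = true)
    (halt : ∀ c ≤ 2 * n, w.getD c false = decide (c % 2 = 0)) :
    ∃ t, w = (List.replicate n [true, false]).flatten ++ [true, true] ++ t := by
  induction n generalizing w with
  | zero =>
    match w, hn, halt with
    | a :: b :: t, hn, halt =>
      have ha := halt 0 le_rfl
      simp only [Nat.mul_zero, List.getD_cons_succ, List.getD_cons_zero] at hn ha
      exact ⟨t, by simp [ha, hn]⟩
  | succ n ih =>
    match w, hn, halt with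
    | a :: b :: t, hn, halt =>
      have ha := halt 0 (by omega)
      have hb := halt 1 (by omega)
      simp only [List.getD_cons_succ, List.getD_cons_zero] at ha hb
      obtain ⟨t', rfl⟩ := ih (w := t) (by simpa [List.getD_cons_succ, Nat.mul_succ] using hn)
        (fun c hc => by simpa [Nat.add_mod] using halt (c + 2) (by omega))
      exact ⟨t', by simp [ha, hb, List.replicate_succ]⟩

theorem leftUnstable_of_alternating {w : List Bool} {i : ℕ} (hi : w.getD (i + 1) false = true)
    (halt : ∀ c ≤ i, w.getD c false = decide (c % 2 = i % 2)) : leftUnstable w := by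
  obtain ⟨n, rfl | rfl⟩ := Nat.even_or_odd' i
  · obtain ⟨t, ht⟩ := exists_eq_alternating_append hi (fun c hc => by simpa using halt c hc)
    exact ⟨[], t, n, Or.inl rfl, by simpa using ht⟩
  · match w, hi, halt with
    | a :: w', hi, halt =>
      have ha := halt 0 (by omega)
      simp only [List.getD_cons_zero] at ha
      obtain ⟨t, ht⟩ := exists_eq_alternating_append (w := w') (n := n) (by simpa using hi)
        (fun c hc => by
          rw [← List.getD_cons_succ (x := a), halt (c + 1) (by omega), decide_eq_decide]
          omega)
      exact ⟨[false], t, n, Or.inr rfl, by simp [ha, ht]⟩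

theorem leftUnstable_of_rule18 {w : List Bool} {i : ℕ} (hi : w.getD i false = true)
    (hi₁ : w.getD (i + 1) false = true)
    (hphase : ∀ c ≤ i, w.getD c false = true → c % 2 = i % 2)
    (hrule : ∀ c, c + 2 ≤ i →
      rule18 (w.getD c false) (w.getD (c + 1) false) (w.getD (c + 2) false) = false) :
    leftUnstable w := by
  -- off-phase sites are 0, where rule 18 is rule 90: an output 0 copies the 1 at `c + 2` to `c`
  have hones : ∀ d, 2 * d ≤ i → w.getD (i - 2 * d) false = true := by
    intro d
    induction d with
    | zero => simpa using hi
    | succ d ih =>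
      intro hd
      have hrule' := hrule (i - 2 * (d + 1)) (by omega)
      have hzero : w.getD (i - 2 * (d + 1) + 1) false = false := by
        by_contra h
        have := hphase (i - 2 * (d + 1) + 1) (by omega) (by simpa using h)
        omega
      rw [show i - 2 * (d + 1) + 2 = i - 2 * d by omega, ih (by omega), hzero] at hrule'
      revert hrule'
      cases w.getD (i - 2 * (d + 1)) false <;> decide
  refine leftUnstable_of_alternating hi₁ fun c hc => ?_
  by_cases hc₂ : c % 2 = i % 2
  · obtain ⟨d, rfl⟩ : ∃ d, i = c + 2 * d := ⟨(i - c) / 2, by omega⟩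
    have := hones d (by omega)
    rw [Nat.add_sub_cancel] at this
    rw [this, decide_eq_true hc₂]
  · simpa [hc₂] using mt (hphase c hc) hc₂

theorem rightUnstable_of_leftUnstable_reverse {w : List Bool} (h : leftUnstable w.reverse) :
    rightUnstable w := by
  obtain ⟨z, t, n, hz, ht⟩ := h
  refine ⟨z, t.reverse, n, hz, ?_⟩
  rw [← List.reverse_reverse w, ht]
  rcases hz with rfl | rfl <;> simp [List.reverse_flatten, List.map_replicate]

theorem rightUnstable_of_rule18 {w : List Bool} {i : ℕ} (hi : w.getD i false = true)
    (hi₁ : w.getD (i + 1) false = true)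
    (hphase : ∀ c, i < c → w.getD c false = true → c % 2 ≠ i % 2)
    (hrule : ∀ c, i < c → c + 2 < w.length →
      rule18 (w.getD c false) (w.getD (c + 1) false) (w.getD (c + 2) false) = false) :
    rightUnstable w := by
  have hlen := List.lt_length_of_getD_eq_true hi₁
  have hrev : ∀ c < w.length, w.reverse.getD c false = w.getD (w.length - 1 - c) false :=
    fun c hc => by rw [List.getD_reverse c hc]
  apply rightUnstable_of_leftUnstable_reverse
  refine leftUnstable_of_rule18 (i := w.length - 2 - i) ?_ ?_ (fun c hc hwc => ?_) (fun c hc => ?_)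
  · rwa [hrev _ (by omega), show w.length - 1 - (w.length - 2 - i) = i + 1 by omega]
  · rwa [hrev _ (by omega), show w.length - 1 - (w.length - 2 - i + 1) = i by omega]
  · rw [hrev _ (by omega)] at hwc
    have := hphase _ (by omega) hwc
    omega
  · rw [hrev _ (by omega), hrev _ (by omega), hrev _ (by omega), rule18_comm]
    have := hrule (w.length - 3 - c) (by omega) (by omega)
    rwa [show w.length - 3 - c + 1 = w.length - 1 - (c + 1) by omega,
      show w.length - 3 - c + 2 = w.length - 1 - c by omega,
      show w.length - 3 - c = w.length - 1 - (c + 2) by omega] at this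

theorem exists_f18W_getD_le_of_not_leftUnstable {w : List Bool} {i : ℕ} (hw : ¬leftUnstable w)
    (hsplit : ParitySplitAt w i) (hi : w.getD i false = true)
    (hi₁ : w.getD (i + 1) false = true) : ∃ a ≤ i, (f18W w).getD a false = true := by
  have hlen := List.lt_length_of_getD_eq_true hi₁
  by_contra! hnone
  refine hw (leftUnstable_of_rule18 hi hi₁ (fun c hc h => (hsplit c h).1 hc) fun c hc => ?_)
  rw [← f18W_getD_of_lt (by omega), ← Bool.not_eq_true]
  exact hnone c (by omega)

theorem exists_f18W_getD_gt_of_not_rightUnstable {w : List Bool} {i : ℕ} (hw : ¬rightUnstable w)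
    (hsplit : ParitySplitAt w i) (hi : w.getD i false = true)
    (hi₁ : w.getD (i + 1) false = true) : ∃ b > i, (f18W w).getD b false = true := by
  by_contra! hnone
  refine hw (rightUnstable_of_rule18 hi hi₁ (fun c hc h => mt (hsplit c h).2 (by omega))
    fun c hc hcl => ?_)
  rw [← f18W_getD_of_lt hcl, ← Bool.not_eq_true]
  exact hnone c hc

theorem kinkCount_f18W_of_stable {w : List Bool} (hw : stable w) (h : kinkCount w = 1) :
    kinkCount (f18W w) = 1 := by
  obtain ⟨i, hi⟩ := kinkCount_eq_one_iff.1 h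
  have hik : kinkAtW w i := (hi i).2 rfl
  obtain ⟨j, hij, hj₂, hwi, hwj, hgap⟩ := kinkAtW_iff.1 hik
  have hsplit := paritySplitAt_of_kinkCount_eq_one h hik
  have hlen := List.lt_length_of_getD_eq_true hwj
  have hwi₂ : w.getD (i + 2) false = false := by
    by_contra h₂
    have := hsplit (i + 2) (by simpa using h₂)
    have := hsplit j hwj
    omega
  have hv := hsplit.f18W hwi hwi₂
  rcases (by omega : j = i + 1 ∨ i + 3 ≤ j) with rfl | hj₃
  · obtain ⟨a, hai, ha⟩ := exists_f18W_getD_le_of_not_leftUnstable (hw ∘ Or.inl) hsplit hwi hwj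
    obtain ⟨b, hib, hb⟩ := exists_f18W_getD_gt_of_not_rightUnstable (hw ∘ Or.inr) hsplit hwi hwj
    exact kinkCount_eq_one_of_paritySplitAt hv ha hai hb hib
  · -- a kink `1 0^(2k) 1` with `k ≥ 1` shrinks to `1 0^(2k-2) 1`
    have hwj₁ := hgap (j - 1) (by omega) (by omega)
    have hwj₂ := hgap (j - 2) (by omega) (by omega)
    have hwi₁ := hgap (i + 1) (by omega) (by omega)
    refine kinkCount_eq_one_of_paritySplitAt hv (a := i) (b := j - 2) ?_ le_rfl ?_ (by omega)
    · rw [f18W_getD_of_lt (by omega), hwi, hwi₁, hwi₂]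
      rfl
    · rw [f18W_getD_of_lt (by omega), hwj₂, show j - 2 + 1 = j - 1 by omega, hwj₁,
        show j - 2 + 2 = j by omega, hwj]
      rfl

/-- Every one-kink word eventually becomes left or right unstable. -/
theorem one_kink_eventually_unstable (w : List Bool) (h : kinkCount w = 1) :
    ∃ n : ℕ, leftUnstable (f18W^[n] w) ∨ rightUnstable (f18W^[n] w) := by
  induction hL : w.length using Nat.strong_induction_on generalizing w with
  | _ L ih =>
    by_cases hw : stable w
    · have hpos : 0 < L := by
        obtain ⟨i, hi⟩ := kinkCount_eq_one_iff.1 h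
        obtain ⟨j, -, -, -, hj, -⟩ := kinkAtW_iff.1 ((hi i).2 rfl)
        have := List.lt_length_of_getD_eq_true hj
        omega
      obtain ⟨n, hn⟩ := ih (L - 2) (by omega) (f18W w) (kinkCount_f18W_of_stable hw h)
        (by rw [f18W_length, hL])
      exact ⟨n + 1, by rwa [Function.iterate_succ_apply]⟩
    · exact ⟨0, not_not.1 hw⟩
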